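/- For every κ ≥ 1/2 one has |κ⁻¹ xᵀr| ≤ λ̂/4, the matrix Λ − s(κ)I with s(κ) := λ₁ − κ⁻¹ xᵀr is invertible with ‖(Λ − s(κ)I)⁻¹‖ ≤ 2 λ̂⁻¹ (spectral norm), and the function f(κ) := κ² + ‖(Λ − s(κ)I)⁻¹ Xᵀr‖² − 1 − ρ is strictly increasing on [1/2, ∞); moreover f(1/2) < 0 and f(2) > 0, so f has a unique zero on [1/2, ∞), and this zero lies in the open interval (1/2, 2). -/

import Mathlib

/-!
Since `|xᵀr| ≤ ‖r‖ ≤ λ̂/8`, for `κ ≥ 1/2` the shift `s(κ) = λ₁ - xᵀr/κ` stays at distance at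
least `3λ̂/4` above every `λⱼ`, `j ≥ 2`; this bounds the diagonal resolvent by `2/λ̂`. Writing
`b = Xᵀr` (so `‖b‖ ≤ ‖r‖` by Bessel), the resolvent term `∑ bⱼ² / (s(κ) - λⱼ)²` of `f` is
`1/27`-Lipschitz in `κ`, which cannot compensate the slope `≥ 1` of `κ²`. Hence `f` is strictly
increasing, and the intermediate value theorem between `f(1/2) < 0 < f(2)` gives the zero.
-/

open Matrix Set

lemma transpose_mul_self_eq_one {m n : Type*} [Fintype m] [DecidableEq n] {Q : Matrix m n ℝ}
    (hQ : ∀ j k, (fun i => Q i j) ⬝ᵥ (fun i => Q i k) = if j = k then 1 else 0) : Qᵀ * Q = 1 := by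
  ext j k
  simpa [mul_apply, one_apply, dotProduct] using hQ j k

section DotProduct

variable {m n : Type*} [Fintype m] [Fintype n]

lemma dotProduct_self_nonneg (v : n → ℝ) : 0 ≤ v ⬝ᵥ v :=
  Finset.sum_nonneg fun i _ => mul_self_nonneg (v i)

lemma dotProduct_sq_le (v w : n → ℝ) : (v ⬝ᵥ w) ^ 2 ≤ (v ⬝ᵥ v) * (w ⬝ᵥ w) := by
  simpa only [dotProduct, sq] using Finset.sum_mul_sq_le_sq_mul_sq Finset.univ v w

lemma abs_dotProduct_le_of_dotProduct_self_eq_one {v w : n → ℝ} (hv : v ⬝ᵥ v = 1) {a : ℝ}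
    (hw : √(w ⬝ᵥ w) ≤ a) : |v ⬝ᵥ w| ≤ a := by
  calc |v ⬝ᵥ w| = √((v ⬝ᵥ w) ^ 2) := (Real.sqrt_sq_eq_abs _).symm
    _ ≤ √(w ⬝ᵥ w) := Real.sqrt_le_sqrt (by simpa [hv] using dotProduct_sq_le v w)
    _ ≤ a := hw

lemma dotProduct_self_transpose_mulVec_le [DecidableEq n] {Q : Matrix m n ℝ} (hQ : Qᵀ * Q = 1)
    (r : m → ℝ) : (Qᵀ *ᵥ r) ⬝ᵥ (Qᵀ *ᵥ r) ≤ r ⬝ᵥ r := by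
  set b := Qᵀ *ᵥ r
  have hrb : r ⬝ᵥ (Q *ᵥ b) = b ⬝ᵥ b := by
    rw [dotProduct_mulVec, ← mulVec_transpose]
  have hbb : (Q *ᵥ b) ⬝ᵥ (Q *ᵥ b) = b ⬝ᵥ b := by
    rw [dotProduct_mulVec, ← mulVec_transpose, mulVec_mulVec, hQ, one_mulVec]
  have := dotProduct_self_nonneg (r - Q *ᵥ b)
  simp only [sub_dotProduct, dotProduct_sub, dotProduct_comm (Q *ᵥ b) r, hrb, hbb] at this
  linarith

end DotProduct

lemma abs_inv_sq_sub_inv_sq_le {m u v : ℝ} (hm : 0 < m) (hu : m ≤ u) (hv : m ≤ v) :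
    |(v ^ 2)⁻¹ - (u ^ 2)⁻¹| ≤ 2 / m ^ 3 * |u - v| := by
  have hu0 : 0 < u := hm.trans_le hu
  have hv0 : 0 < v := hm.trans_le hv
  have hsplit : (v ^ 2)⁻¹ - (u ^ 2)⁻¹ = (u - v) * (1 / (u * v ^ 2) + 1 / (u ^ 2 * v)) := by
    field_simp; ring
  have h1 : 1 / (u * v ^ 2) ≤ 1 / m ^ 3 := one_div_le_one_div_of_le (by positivity) (by
    calc m ^ 3 = m * m ^ 2 := by ring
      _ ≤ u * v ^ 2 := by gcongr)
  have h2 : 1 / (u ^ 2 * v) ≤ 1 / m ^ 3 := one_div_le_one_div_of_le (by positivity) (by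
    calc m ^ 3 = m ^ 2 * m := by ring
      _ ≤ u ^ 2 * v := by gcongr)
  rw [hsplit, abs_mul, abs_of_pos (by positivity : 0 < 1 / (u * v ^ 2) + 1 / (u ^ 2 * v)),
    mul_comm]
  gcongr
  linarith [show 2 / m ^ 3 = 1 / m ^ 3 + 1 / m ^ 3 by ring]

section Resolvent

variable {ι : Type*} [Fintype ι]

/-- `‖(diagonal d - s • 1)⁻¹ z‖²` when `s` is not one of the `d j`. -/
noncomputable def resolventNormSq (d z : ι → ℝ) (s : ℝ) : ℝ :=
  ∑ j, z j ^ 2 / (s - d j) ^ 2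

variable {d z : ι → ℝ} {m s t : ℝ}

lemma resolventNormSq_nonneg (d z : ι → ℝ) (s : ℝ) : 0 ≤ resolventNormSq d z s := by
  unfold resolventNormSq; positivity

lemma resolventNormSq_le (hm : 0 < m) (hs : ∀ j, m ≤ s - d j) :
    resolventNormSq d z s ≤ (z ⬝ᵥ z) / m ^ 2 := by
  rw [resolventNormSq, dotProduct, Finset.sum_div]
  refine Finset.sum_le_sum fun j _ => ?_
  rw [← sq]
  gcongr
  exact hs j

lemma sqrt_resolventNormSq_le (hm : 0 < m) (hs : ∀ j, m ≤ s - d j) :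
    √(resolventNormSq d z s) ≤ m⁻¹ * √(z ⬝ᵥ z) := by
  calc √(resolventNormSq d z s) ≤ √((z ⬝ᵥ z) / m ^ 2) :=
        Real.sqrt_le_sqrt (resolventNormSq_le hm hs)
    _ = m⁻¹ * √(z ⬝ᵥ z) := by
      rw [Real.sqrt_div' _ (sq_nonneg m), Real.sqrt_sq hm.le, div_eq_inv_mul]

lemma abs_resolventNormSq_sub_le (hm : 0 < m) (hs : ∀ j, m ≤ s - d j) (ht : ∀ j, m ≤ t - d j) :
    |resolventNormSq d z t - resolventNormSq d z s| ≤ 2 / m ^ 3 * (z ⬝ᵥ z) * |s - t| := by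
  rw [resolventNormSq, resolventNormSq, ← Finset.sum_sub_distrib, dotProduct, mul_right_comm,
    Finset.mul_sum]
  refine (Finset.abs_sum_le_sum_abs _ _).trans (Finset.sum_le_sum fun j _ => ?_)
  have key := abs_inv_sq_sub_inv_sq_le hm (hs j) (ht j)
  rw [sub_sub_sub_cancel_right] at key
  rw [div_eq_mul_inv, div_eq_mul_inv, ← mul_sub, abs_mul, abs_of_nonneg (sq_nonneg _), ← sq,
    mul_comm]
  gcongr

end Resolvent

section DiagonalResolvent

variable {ι : Type*} [DecidableEq ι]

lemma diagonal_sub_smul_one (d : ι → ℝ) (s : ℝ) :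
    diagonal d - s • (1 : Matrix ι ι ℝ) = diagonal fun j => d j - s := by
  rw [smul_one_eq_diagonal, diagonal_sub]

variable [Fintype ι] {d : ι → ℝ} {s : ℝ}

lemma inv_diagonal_of_ne_zero (hd : ∀ j, d j ≠ 0) :
    (diagonal d)⁻¹ = diagonal fun j => (d j)⁻¹ :=
  inv_eq_right_inv <| by
    rw [diagonal_mul_diagonal, ← diagonal_one]
    exact congrArg diagonal (funext fun j => mul_inv_cancel₀ (hd j))

lemma isUnit_diagonal_sub_smul_one (hs : ∀ j, d j ≠ s) :
    IsUnit (diagonal d - s • (1 : Matrix ι ι ℝ)) := by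
  rw [diagonal_sub_smul_one, isUnit_diagonal, Pi.isUnit_iff]
  exact fun j => (sub_ne_zero.2 (hs j)).isUnit

lemma dotProduct_self_inv_diagonal_sub_smul_one_mulVec (hs : ∀ j, d j ≠ s) (z : ι → ℝ) :
    ((diagonal d - s • (1 : Matrix ι ι ℝ))⁻¹ *ᵥ z) ⬝ᵥ
      ((diagonal d - s • (1 : Matrix ι ι ℝ))⁻¹ *ᵥ z) = resolventNormSq d z s := by
  rw [diagonal_sub_smul_one, inv_diagonal_of_ne_zero fun j => sub_ne_zero.2 (hs j)]
  refine Finset.sum_congr rfl fun j _ => ?_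
  rw [mulVec_diagonal, sub_sq_comm]
  field_simp

end DiagonalResolvent

lemma abs_inv_mul_le_of_half_le {κ : ℝ} (hκ : 1 / 2 ≤ κ) (c : ℝ) : |κ⁻¹ * c| ≤ 2 * |c| := by
  rw [abs_mul, abs_inv, abs_of_pos (by linarith)]
  gcongr
  exact inv_le_of_inv_le₀ (by norm_num) (by norm_num [hκ])

lemma abs_inv_sub_inv_le_of_half_le {a b : ℝ} (ha : 1 / 2 ≤ a) (hb : 1 / 2 ≤ b) :
    |a⁻¹ - b⁻¹| ≤ 4 * |a - b| := by
  have hab : 1 / 4 ≤ a * b := by nlinarith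
  rw [inv_sub_inv (by linarith) (by linarith), abs_div, abs_sub_comm,
    abs_of_pos (by linarith : 0 < a * b), div_le_iff₀ (by linarith)]
  nlinarith [abs_nonneg (a - b)]

lemma exists_unique_zero_of_strictMonoOn {f : ℝ → ℝ} {a b : ℝ} (hab : a ≤ b)
    (hf : StrictMonoOn f (Ici a)) (hcont : ContinuousOn f (Icc a b)) (ha : f a < 0)
    (hb : 0 < f b) : ∃ z, (z ∈ Ioo a b ∧ f z = 0) ∧ ∀ z' ∈ Ici a, f z' = 0 → z' = z := by
  obtain ⟨z, hz, hfz⟩ := intermediate_value_Ioo hab hcont ⟨ha, hb⟩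
  exact ⟨z, ⟨hz, hfz⟩, fun z' hz' hfz' =>
    hf.injOn hz' (mem_Ici.2 hz.1.le) (hfz'.trans hfz.symm)⟩

lemma strictMonoOn_sq_add_sub {G : ℝ → ℝ} (hG : LipschitzOnWith 1 G (Ici (1 / 2))) (a : ℝ) :
    StrictMonoOn (fun κ => κ ^ 2 + G κ - a) (Ici (1 / 2)) := by
  intro κ₁ h₁ κ₂ h₂ hlt
  have hG₁₂ := abs_le.1 (hG.dist_le_mul κ₂ h₂ κ₁ h₁)
  rw [mem_Ici] at h₁ h₂
  simp only [Real.dist_eq, NNReal.coe_one, one_mul, abs_of_pos (sub_pos.2 hlt)] at hG₁₂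
  nlinarith

section Shift

variable {ι : Type*} {d z : ι → ℝ} {lam1 c g : ℝ}

lemma le_sub_inv_mul_sub (hd : ∀ j, d j ≤ lam1 - g) (hc : |c| ≤ g / 8) {κ : ℝ}
    (hκ : 1 / 2 ≤ κ) (j : ι) : 3 / 4 * g ≤ lam1 - κ⁻¹ * c - d j := by
  have := abs_le.1 (abs_inv_mul_le_of_half_le hκ c)
  linarith [hd j]

variable [Fintype ι]

/-- Along `s(κ) = λ₁ - c / κ` the resolvent term has slope at most
`2 ‖z‖² / (3g/4)³ · 4 |c| ≤ 1/27`. -/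
lemma lipschitzOnWith_resolventNormSq_sub_inv_mul (hg : 0 < g) (hd : ∀ j, d j ≤ lam1 - g)
    (hc : |c| ≤ g / 8) (hz : z ⬝ᵥ z ≤ (g / 8) ^ 2) :
    LipschitzOnWith 1 (fun κ => resolventNormSq d z (lam1 - κ⁻¹ * c)) (Ici (1 / 2)) := by
  refine LipschitzOnWith.of_dist_le_mul fun κ₁ h₁ κ₂ h₂ => ?_
  rw [mem_Ici] at h₁ h₂
  have hm : 0 < 3 / 4 * g := by positivity
  have hz₀ := dotProduct_self_nonneg z
  have hs : |(lam1 - κ₂⁻¹ * c) - (lam1 - κ₁⁻¹ * c)| ≤ g / 2 * |κ₁ - κ₂| := by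
    rw [sub_sub_sub_cancel_left, ← sub_mul, abs_mul]
    calc |κ₁⁻¹ - κ₂⁻¹| * |c| ≤ 4 * |κ₁ - κ₂| * (g / 8) := by
          gcongr
          exact abs_inv_sub_inv_le_of_half_le h₁ h₂
      _ = g / 2 * |κ₁ - κ₂| := by ring
  rw [Real.dist_eq, Real.dist_eq, NNReal.coe_one, one_mul]
  calc _ ≤ 2 / (3 / 4 * g) ^ 3 * (z ⬝ᵥ z) * (g / 2 * |κ₁ - κ₂|) := by
        refine (abs_resolventNormSq_sub_le hm (le_sub_inv_mul_sub hd hc h₂)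
          (le_sub_inv_mul_sub hd hc h₁)).trans ?_
        gcongr
    _ ≤ 2 / (3 / 4 * g) ^ 3 * (g / 8) ^ 2 * (g / 2 * |κ₁ - κ₂|) := by gcongr
    _ = |κ₁ - κ₂| / 27 := by field_simp; ring
    _ ≤ |κ₁ - κ₂| := by linarith [abs_nonneg (κ₁ - κ₂)]

lemma resolventNormSq_sub_inv_half_mul_le (hg : 0 < g) (hd : ∀ j, d j ≤ lam1 - g)
    (hc : |c| ≤ g / 8) (hz : z ⬝ᵥ z ≤ (g / 8) ^ 2) :
    resolventNormSq d z (lam1 - (1 / 2)⁻¹ * c) ≤ 1 / 36 := by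
  refine (resolventNormSq_le (by positivity) (le_sub_inv_mul_sub hd hc le_rfl)).trans ?_
  calc _ ≤ (g / 8) ^ 2 / (3 / 4 * g) ^ 2 := by gcongr
    _ = 1 / 36 := by field_simp; ring

end Shift

/-- Auxiliary facts from the proof of Lemma 5.6 (i): bounds on the shifted resolvent,
strict monotonicity of `f`, sign changes and the unique zero of `f` on `[1/2, ∞)`. -/
theorem stmt3 (N : ℕ) (hN : 2 ≤ N)
    (x : Fin N → ℝ) (X : Matrix (Fin N) (Fin (N - 1)) ℝ)
    (lam1 : ℝ) (lam2 : Fin (N - 1) → ℝ)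
    (hxx : x ⬝ᵥ x = 1)
    (hXX : ∀ j k, (fun i => X i j) ⬝ᵥ (fun i => X i k) = if j = k then (1 : ℝ) else 0)
    (hord : Antitone lam2)
    (hsep : lam2 ⟨0, by omega⟩ < lam1)
    (lamhat : ℝ) (hlamhat : lamhat = lam1 - lam2 ⟨0, by omega⟩)
    (ρ : ℝ) (r : Fin N → ℝ)
    (hρ : |ρ| ≤ 1 / 2)
    (hr : Real.sqrt (r ⬝ᵥ r) ≤ lamhat / 8)
    (sfun : ℝ → ℝ) (hsfun : sfun = fun κ => lam1 - κ⁻¹ * (x ⬝ᵥ r))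
    (f : ℝ → ℝ)
    (hf : f = fun κ =>
      κ ^ 2 +
        (((Matrix.diagonal lam2 - sfun κ • (1 : Matrix (Fin (N - 1)) (Fin (N - 1)) ℝ))⁻¹ *ᵥ
            (Xᵀ *ᵥ r)) ⬝ᵥ
          ((Matrix.diagonal lam2 - sfun κ • (1 : Matrix (Fin (N - 1)) (Fin (N - 1)) ℝ))⁻¹ *ᵥ
            (Xᵀ *ᵥ r))) - 1 - ρ) :
    (∀ κ : ℝ, 1 / 2 ≤ κ →
      |κ⁻¹ * (x ⬝ᵥ r)| ≤ lamhat / 4 ∧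
      IsUnit (Matrix.diagonal lam2 - sfun κ • (1 : Matrix (Fin (N - 1)) (Fin (N - 1)) ℝ)) ∧
      ∀ z : Fin (N - 1) → ℝ,
        Real.sqrt
            (((Matrix.diagonal lam2 - sfun κ • (1 : Matrix (Fin (N - 1)) (Fin (N - 1)) ℝ))⁻¹ *ᵥ z) ⬝ᵥ
              ((Matrix.diagonal lam2 - sfun κ • (1 : Matrix (Fin (N - 1)) (Fin (N - 1)) ℝ))⁻¹ *ᵥ z))
          ≤ 2 * lamhat⁻¹ * Real.sqrt (z ⬝ᵥ z)) ∧
    StrictMonoOn f (Set.Ici (1 / 2 : ℝ)) ∧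
    f (1 / 2) < 0 ∧ 0 < f 2 ∧
    ∃ κ₀ : ℝ, (κ₀ ∈ Set.Ioo (1 / 2 : ℝ) 2 ∧ f κ₀ = 0) ∧
      ∀ κ' ∈ Set.Ici (1 / 2 : ℝ), f κ' = 0 → κ' = κ₀ := by
  have hg : 0 < lamhat := by rw [hlamhat]; linarith
  have hd : ∀ j, lam2 j ≤ lam1 - lamhat := fun j => by
    rw [hlamhat]; linarith [hord (show (⟨0, by omega⟩ : Fin (N - 1)) ≤ j from Nat.zero_le _)]
  have hc := abs_dotProduct_le_of_dotProduct_self_eq_one hxx hr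
  have hb := (dotProduct_self_transpose_mulVec_le (transpose_mul_self_eq_one hXX) r).trans
    (Real.sqrt_le_iff.1 hr).2
  subst hsfun
  have hgap : ∀ κ, 1 / 2 ≤ κ → ∀ j, 3 / 4 * lamhat ≤ lam1 - κ⁻¹ * (x ⬝ᵥ r) - lam2 j :=
    fun κ hκ => le_sub_inv_mul_sub hd hc hκ
  have hne : ∀ κ, 1 / 2 ≤ κ → ∀ j, lam2 j ≠ lam1 - κ⁻¹ * (x ⬝ᵥ r) :=
    fun κ hκ j => (by linarith [hgap κ hκ j] : lam2 j < _).ne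
  have hfF : EqOn f (fun κ => κ ^ 2 +
      resolventNormSq lam2 (Xᵀ *ᵥ r) (lam1 - κ⁻¹ * (x ⬝ᵥ r)) - (1 + ρ)) (Ici (1 / 2)) :=
    fun κ hκ => by
      simp only [hf]
      rw [dotProduct_self_inv_diagonal_sub_smul_one_mulVec (hne κ hκ)]
      ring
  have hG := lipschitzOnWith_resolventNormSq_sub_inv_mul hg hd hc hb
  have hmono : StrictMonoOn f (Ici (1 / 2)) := (strictMonoOn_sq_add_sub hG _).congr hfF.symm
  have hcont : ContinuousOn f (Icc (1 / 2) 2) := by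
    refine (ContinuousOn.congr ?_ hfF).mono Icc_subset_Ici_self
    exact ((continuous_pow 2).continuousOn.add hG.continuousOn).sub continuousOn_const
  have hneg : f (1 / 2) < 0 := by
    rw [hfF self_mem_Ici]
    linarith [abs_le.1 hρ, resolventNormSq_sub_inv_half_mul_le hg hd hc hb]
  have hpos : 0 < f 2 := by
    rw [hfF (by norm_num : (2 : ℝ) ∈ Ici (1 / 2))]
    linarith [abs_le.1 hρ, resolventNormSq_nonneg lam2 (Xᵀ *ᵥ r) (lam1 - 2⁻¹ * (x ⬝ᵥ r))]
  refine ⟨fun κ hκ => ⟨?_, isUnit_diagonal_sub_smul_one (hne κ hκ), fun z => ?_⟩, hmono, hneg,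
    hpos, exists_unique_zero_of_strictMonoOn (by norm_num) hmono hcont hneg hpos⟩
  · linarith [abs_inv_mul_le_of_half_le hκ (x ⬝ᵥ r)]
  · rw [dotProduct_self_inv_diagonal_sub_smul_one_mulVec (hne κ hκ),
      show 2 * lamhat⁻¹ = (lamhat / 2)⁻¹ by rw [inv_div, div_eq_mul_inv]]
    exact sqrt_resolventNormSq_le (by positivity) fun j => by linarith [hgap κ hκ j]
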